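/- Let V be a vector space with basis B = V^+, and R ⊆ V⊗V a subspace spanned by elements of the form v ⊗ p with v ∈ B and p ∈ P_1(v), where P_1(v) ⊆ V depends on v. Suppose that for every v ∈ B and every k ≥ 1, the family {P_1(v) ⊗ V^{⊗k}} ∪ {V^{⊗i} ⊗ R ⊗ V^{⊗(k−i−1)} : 0 ≤ i ≤ k−1} of subspaces of V^{⊗(k+1)} is distributive. Then the family {V^{⊗i} ⊗ R ⊗ V^{⊗(k−i)} : 0 ≤ i ≤ k} of subspaces of V^{⊗(k+2)} is distributive. -/

import Mathlib

noncomputable section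

/-- A layered directed graph: vertices come with a rank (layer), and each
edge goes from a vertex of rank `j+1` to a vertex of rank `j`. -/
structure LayeredGraph where
  V : Type
  E : Type
  rank : V → ℕ
  tail : E → V
  head : E → V
  rank_tail : ∀ e, rank (tail e) = rank (head e) + 1

namespace LayeredGraph

variable (G : LayeredGraph)

/-- `V₀ = {*}`: there is a unique vertex of rank `0`. -/
def HasUniqueMin : Prop := ∃ s : G.V, G.rank s = 0 ∧ ∀ v, G.rank v = 0 → v = s

/-- Every vertex of `V⁺` has at least one outgoing edge. -/
def EdgeFull : Prop := ∀ v, G.rank v ≠ 0 → ∃ e, G.tail e = v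

/-- `u` covers `w`: there is an edge from `u` to `w`. -/
def adj (u w : G.V) : Prop := ∃ e, G.tail e = u ∧ G.head e = w

/-- `v ≥ u` with a prescribed rank drop `j` (this is `u ∈ S_j(v)`;
for `j = 0` it forces `u = v`). -/
def SRel (v u : G.V) (j : ℕ) : Prop :=
  Relation.ReflTransGen G.adj v u ∧ G.rank u + j = G.rank v

/-- A uniform layered graph: for each vertex `v` of rank `≥ 2`, all elements of
`S₁(v)` are equivalent under the equivalence relation generated by
`u ∼ w ↔ S₁(u) ∩ S₁(w) ≠ ∅`. -/
def Uniform : Prop := ∀ v u w, 2 ≤ G.rank v → G.adj v u → G.adj v w →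
  Relation.EqvGen (fun a b => G.adj v a ∧ G.adj v b ∧ ∃ x, G.adj a x ∧ G.adj b x) u w

/-- A (nonempty) directed path: a nonempty list of composable edges. -/
def IsPathList (l : List G.E) : Prop :=
  l ≠ [] ∧ l.Chain' (fun e f => G.head e = G.tail f)

/-- The tail (initial vertex) of a path, as an `Option`. -/
def firstV (l : List G.E) : Option G.V := l.head?.map G.tail

/-- The head (final vertex) of a path, as an `Option`. -/
def lastV (l : List G.E) : Option G.V := l.getLast?.map G.head

/-- The list `v₀, v₁, …, v_m` of vertices visited by a path. -/
def pathVerts (l : List G.E) : List G.V :=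
  match l with
  | [] => []
  | e :: _ => G.tail e :: l.map G.head

/-- The type `V⁺` of vertices of positive rank. -/
def Vp := {v : G.V // G.rank v ≠ 0}

variable (F : Type) [Field F]

/-- The coefficient `e(π,k)` of `t^k` in `P_π(t) = (1 - te₁)⋯(1 - te_m)`,
an element of the tensor algebra `T(E)` (modelled as the free algebra on `E`). -/
def ecoef (π : List G.E) (k : ℕ) : FreeAlgebra F G.E :=
  ((-1 : F) ^ k) • ((π.sublistsLen k).map fun l => (l.map (FreeAlgebra.ι F)).prod).sum

/-- The two-sided ideal generated by a set, as a submodule. -/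
def twoSidedSpan {A : Type} [Ring A] [Algebra F A] (S : Set A) : Submodule F A :=
  Submodule.span F {x | ∃ a s b, s ∈ S ∧ x = a * s * b}

/-- The defining ideal `R` of `A(Γ)`, generated by the differences
`e(π₁,k) - e(π₂,k)` over pairs of paths with the same tail and the same head. -/
def Rideal : Submodule F (FreeAlgebra F G.E) :=
  twoSidedSpan F {x | ∃ π₁ π₂ k, G.IsPathList π₁ ∧ G.IsPathList π₂ ∧
    G.firstV π₁ = G.firstV π₂ ∧ G.lastV π₁ = G.lastV π₂ ∧
    1 ≤ k ∧ k ≤ π₁.length ∧ x = G.ecoef F π₁ k - G.ecoef F π₂ k}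

/-- A vertex viewed in `T(V⁺)` (the free algebra on `V⁺`), with `*` sent to `0`. -/
def vert (v : G.V) : FreeAlgebra F G.Vp :=
  if h : G.rank v = 0 then 0 else FreeAlgebra.ι F (⟨v, h⟩ : G.Vp)

/-- The algebra homomorphism `θ : T(E) → T(V⁺)`, induced by `e ↦ t(e) - h(e)`. -/
def theta : FreeAlgebra F G.E →ₐ[F] FreeAlgebra F G.Vp :=
  FreeAlgebra.lift F fun e => G.vert F (G.tail e) - G.vert F (G.head e)

/-- The filtration `T(E)_i` of `T(E)`, where an edge `e` has degree `|t(e)|`. -/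
def filtE (i : ℕ) : Submodule F (FreeAlgebra F G.E) :=
  Submodule.span F {x | ∃ l : List G.E, (l.map fun e => G.rank (G.tail e)).sum ≤ i ∧
    x = (l.map (FreeAlgebra.ι F)).prod}

/-- The homogeneous component `T(V⁺)_[i]` of `T(V⁺)`,
where a vertex has degree equal to its rank. -/
def homogV (i : ℕ) : Submodule F (FreeAlgebra F G.Vp) :=
  Submodule.span F {x | ∃ l : List G.Vp, (l.map fun p => G.rank p.1).sum = i ∧
    x = (l.map (FreeAlgebra.ι F)).prod}

/-- The filtration `T(V⁺)_i` of `T(V⁺)` induced by the vertex grading. -/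
def filtV (i : ℕ) : Submodule F (FreeAlgebra F G.Vp) :=
  Submodule.span F {x | ∃ l : List G.Vp, (l.map fun p => G.rank p.1).sum ≤ i ∧
    x = (l.map (FreeAlgebra.ι F)).prod}

/-- The associated graded ideal `gr I` of an ideal `I ⊆ T(V⁺)`: its degree-`k`
component is `T(V⁺)_[k] ∩ (T(V⁺)_{k-1} + I)`. -/
def grIdeal (I : Submodule F (FreeAlgebra F G.Vp)) : Submodule F (FreeAlgebra F G.Vp) :=
  ⨆ k, G.homogV F k ⊓ ((⨆ j, ⨆ _ : j < k, G.homogV F j) ⊔ I)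

/-- The monomial `v(π,k) = v₀v₁⋯v_{k-1} ∈ T(V⁺)` attached to a path `π`. -/
def vmon (π : List G.E) (k : ℕ) : FreeAlgebra F G.Vp :=
  (((G.pathVerts π).take k).map (G.vert F)).prod

/-- The ideal `R_gr ⊆ T(V⁺)`, generated by the differences `v(π₁,k) - v(π₂,k)`
over pairs of paths with common tail. -/
def Rgr : Submodule F (FreeAlgebra F G.Vp) :=
  twoSidedSpan F {x | ∃ π₁ π₂ k, G.IsPathList π₁ ∧ G.IsPathList π₂ ∧
    G.firstV π₁ = G.firstV π₂ ∧ 2 ≤ k ∧ k ≤ π₁.length ∧ k ≤ π₂.length ∧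
    x = G.vmon F π₁ k - G.vmon F π₂ k}

/-- The degree-one subspace `V = F·V⁺ ⊆ T(V⁺)`. -/
def Wone : Submodule F (FreeAlgebra F G.Vp) :=
  Submodule.span F (Set.range (FreeAlgebra.ι F))

/-- The quadratic relation space `R` of `gr A(Γ)`,
spanned by the elements `v(u - w)` with `u, w ∈ S₁(v)`. -/
def Rquad : Submodule F (FreeAlgebra F G.Vp) :=
  Submodule.span F {x | ∃ v u w, G.adj v u ∧ G.adj v w ∧
    x = G.vert F v * (G.vert F u - G.vert F w)}

/-- `S_j(v) = span{u : v > u, |u| = |v| - j}` (with `S₀(v) = span{v}`). -/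
def Sspan (j : ℕ) (v : G.V) : Submodule F (FreeAlgebra F G.Vp) :=
  Submodule.span F {x | ∃ u, G.SRel v u j ∧ x = G.vert F u}

/-- `P_j(v) = span{u - w : v > u, v > w, |u| = |w| = |v| - j}`. -/
def Pspan (j : ℕ) (v : G.V) : Submodule F (FreeAlgebra F G.Vp) :=
  Submodule.span F {x | ∃ u w, G.SRel v u j ∧ G.SRel v w j ∧
    x = G.vert F u - G.vert F w}

end LayeredGraph

/-- The elements of the sublattice generated by a family of subspaces. -/
inductive latGen {α : Type*} [Lattice α] (S : Set α) : α → Prop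
  | base {x} : x ∈ S → latGen S x
  | inf {x y} : latGen S x → latGen S y → latGen S (x ⊓ y)
  | sup {x y} : latGen S x → latGen S y → latGen S (x ⊔ y)

/-- A family of elements of a lattice is distributive if the sublattice
it generates is distributive. -/
def IsDistribFamily {α : Type*} [Lattice α] (S : Set α) : Prop :=
  ∀ x y z, latGen S x → latGen S y → latGen S z → x ⊓ (y ⊔ z) = (x ⊓ y) ⊔ (x ⊓ z)

/-- Backelin's criterion: a quadratic algebra `T(V)/(R)` (given by the degree-one
subspace `V` and the relation space `R ⊆ V⊗V` inside the tensor algebra) is Koszul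
iff for each `k` the collection of subspaces `V^i R V^(k-i)` generates a
distributive lattice. -/
def IsKoszulQuad (F : Type) [Field F] {A : Type} [Ring A] [Algebra F A]
    (W R : Submodule F A) : Prop :=
  ∀ k : ℕ, IsDistribFamily {X | ∃ i ≤ k, X = W ^ i * R * W ^ (k - i)}

end


noncomputable section Lemma45Aux

namespace Lemma45Aux

variable (F : Type) [Field F] {B : Type}

/-- The free algebra as a monoid algebra on the free monoid. -/
def emb : FreeAlgebra F B ≃ₐ[F] MonoidAlgebra F (FreeMonoid B) :=
  FreeAlgebra.equivMonoidAlgebraFreeMonoid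

lemma jinj (b : B) : Function.Injective (fun w : FreeMonoid B => FreeMonoid.of b * w) := by
  intro w₁ w₂ h
  have := congrArg FreeMonoid.toList h
  simp only [FreeMonoid.toList_of_mul] at this
  exact FreeMonoid.toList.injective (List.cons_injective this)

/-- "Divide by `ι b` on the left". -/
def pib (b : B) : FreeAlgebra F B →ₗ[F] FreeAlgebra F B :=
  (emb F).symm.toLinearMap ∘ₗ (MonoidAlgebra.coeffLinearEquiv F).symm.toLinearMap ∘ₗ
    (Finsupp.lcomapDomain (fun w : FreeMonoid B => FreeMonoid.of b * w) (jinj b)) ∘ₗ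
    (MonoidAlgebra.coeffLinearEquiv F).toLinearMap ∘ₗ (emb F).toLinearMap

lemma emb_ι (c : B) : emb F (FreeAlgebra.ι F c) =
    MonoidAlgebra.single (FreeMonoid.of c) (1 : F) := by
  simp [emb, FreeAlgebra.equivMonoidAlgebraFreeMonoid]

lemma pib_ι_mul_self (b : B) (x : FreeAlgebra F B) :
    pib F b (FreeAlgebra.ι F b * x) = x := by
  have key : Finsupp.lcomapDomain (R := F) (fun w : FreeMonoid B => FreeMonoid.of b * w) (jinj b)
      (MonoidAlgebra.single (FreeMonoid.of b) (1 : F) * emb F x).coeff = (emb F x).coeff := by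
    ext a
    show (MonoidAlgebra.single (FreeMonoid.of b) (1 : F) * emb F x).coeff (FreeMonoid.of b * a) = _
    rw [MonoidAlgebra.coeff_single_mul_mul, one_mul]
  have hrfl : pib F b (FreeAlgebra.ι F b * x) = (emb F).symm
      (MonoidAlgebra.ofCoeff (Finsupp.lcomapDomain (R := F) (fun w : FreeMonoid B => FreeMonoid.of b * w) (jinj b)
        (emb F (FreeAlgebra.ι F b * x)).coeff)) := rfl
  rw [hrfl, map_mul, emb_ι, key, MonoidAlgebra.ofCoeff_coeff, AlgEquiv.symm_apply_apply]

lemma pib_ι_mul_ne {b c : B} (hbc : b ≠ c) (x : FreeAlgebra F B) :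
    pib F b (FreeAlgebra.ι F c * x) = 0 := by
  have key : Finsupp.lcomapDomain (R := F) (fun w : FreeMonoid B => FreeMonoid.of b * w) (jinj b)
      (MonoidAlgebra.single (FreeMonoid.of c) (1 : F) * emb F x).coeff = 0 := by
    ext a
    show (MonoidAlgebra.single (FreeMonoid.of c) (1 : F) * emb F x).coeff (FreeMonoid.of b * a) = _
    rw [MonoidAlgebra.single_mul_apply_of_not_exists_mul]
    · simp
    · rintro ⟨d, hd⟩
      have := congrArg FreeMonoid.toList hd
      simp only [FreeMonoid.toList_of_mul] at this
      exact hbc (List.head_eq_of_cons_eq this)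
  have hrfl : pib F b (FreeAlgebra.ι F c * x) = (emb F).symm
      (MonoidAlgebra.ofCoeff (Finsupp.lcomapDomain (R := F) (fun w : FreeMonoid B => FreeMonoid.of b * w) (jinj b)
        (emb F (FreeAlgebra.ι F c * x)).coeff)) := rfl
  rw [hrfl, map_mul, emb_ι, key, MonoidAlgebra.ofCoeff_zero, map_zero]


lemma span_mul_eq_map (a : FreeAlgebra F B) (M : Submodule F (FreeAlgebra F B)) :
    Submodule.span F {a} * M = M.map (LinearMap.mulLeft F a) := by
  ext x
  simp [Submodule.mem_span_singleton_mul, Submodule.mem_map, LinearMap.mulLeft_apply]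

variable {F}

lemma pib_mem_of_mem_iSup {M : B → Submodule F (FreeAlgebra F B)} {x : FreeAlgebra F B}
    (hx : x ∈ ⨆ b, (M b).map (LinearMap.mulLeft F (FreeAlgebra.ι F b))) (b : B) :
    pib F b x ∈ M b := by
  refine (iSup_le (fun c => ?_) : _ ≤ (M b).comap (pib F b)) hx
  rintro _ ⟨n, hn, rfl⟩
  simp only [Submodule.mem_comap, LinearMap.mulLeft_apply]
  by_cases hbc : b = c
  · subst hbc; rw [pib_ι_mul_self]; exact hn
  · rw [pib_ι_mul_ne F hbc]; exact zero_mem _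

lemma inf_iSup_map (M N : B → Submodule F (FreeAlgebra F B)) :
    (⨆ b, (M b).map (LinearMap.mulLeft F (FreeAlgebra.ι F b))) ⊓
      (⨆ b, (N b).map (LinearMap.mulLeft F (FreeAlgebra.ι F b))) =
      ⨆ b, (M b ⊓ N b).map (LinearMap.mulLeft F (FreeAlgebra.ι F b)) := by
  apply le_antisymm
  · intro x hx
    rw [Submodule.mem_inf] at hx
    obtain ⟨hxM, hxN⟩ := hx
    have hM : ∀ b, pib F b x ∈ M b := pib_mem_of_mem_iSup hxM
    have hN : ∀ b, pib F b x ∈ N b := pib_mem_of_mem_iSup hxN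
    rw [Submodule.mem_iSup_iff_exists_finsupp] at hxM
    obtain ⟨f, hf, hsum⟩ := hxM
    have hfb : ∀ b, f b = FreeAlgebra.ι F b * pib F b (f b) := by
      intro b
      obtain ⟨m, hm, hme⟩ := hf b
      simp only [LinearMap.mulLeft_apply] at hme
      rw [← hme, pib_ι_mul_self]
    have hpx : ∀ b, pib F b x = pib F b (f b) := by
      intro b
      rw [← hsum, Finsupp.sum, map_sum]
      apply Finset.sum_eq_single
      · intro c _ hcb
        rw [hfb c, pib_ι_mul_ne F (Ne.symm hcb)]
      · intro hb
        rw [Finsupp.notMem_support_iff.mp hb, map_zero]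
    rw [← hsum, Finsupp.sum]
    refine Submodule.sum_mem _ fun b _ => ?_
    have hfb' : f b = (LinearMap.mulLeft F (FreeAlgebra.ι F b)) (pib F b x) := by
      rw [LinearMap.mulLeft_apply, hpx b]; exact hfb b
    rw [hfb']
    exact le_iSup (fun b => (M b ⊓ N b).map (LinearMap.mulLeft F (FreeAlgebra.ι F b))) b
      (Submodule.mem_map_of_mem ⟨hM b, hN b⟩)
  · refine iSup_le fun b => le_inf ?_ ?_
    · exact le_trans (Submodule.map_mono inf_le_left)
        (le_iSup (fun c => (M c).map (LinearMap.mulLeft F (FreeAlgebra.ι F c))) b)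
    · exact le_trans (Submodule.map_mono inf_le_right)
        (le_iSup (fun c => (N c).map (LinearMap.mulLeft F (FreeAlgebra.ι F c))) b)

lemma sup_iSup_map (M N : B → Submodule F (FreeAlgebra F B)) :
    (⨆ b, (M b).map (LinearMap.mulLeft F (FreeAlgebra.ι F b))) ⊔
      (⨆ b, (N b).map (LinearMap.mulLeft F (FreeAlgebra.ι F b))) =
      ⨆ b, (M b ⊔ N b).map (LinearMap.mulLeft F (FreeAlgebra.ι F b)) := by
  rw [← iSup_sup_eq]
  exact iSup_congr fun b => (Submodule.map_sup _ _ _).symm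

end Lemma45Aux

/-- Lemma 4.5: let `V` have basis `B`, and let `R ⊆ V⊗V` be spanned
by elements `v ⊗ p` with `v ∈ B`, `p ∈ P₁(v)`.  If for every `v ∈ B` and `k ≥ 1`
the family `{P₁(v)V^k} ∪ {V^i R V^(k-i-1) : 0 ≤ i ≤ k-1}` is distributive, then
the family `{V^i R V^(k-i) : 0 ≤ i ≤ k}` is distributive. -/
theorem lemma_4_5 (F B : Type) [Field F]
    (W : Submodule F (FreeAlgebra F B))
    (hW : W = Submodule.span F (Set.range (FreeAlgebra.ι F)))
    (P1 : B → Submodule F (FreeAlgebra F B)) (hP1 : ∀ b, P1 b ≤ W)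
    (R : Submodule F (FreeAlgebra F B))
    (hR : R = ⨆ b, Submodule.span F {FreeAlgebra.ι F b} * P1 b)
    (hdist : ∀ b k, 1 ≤ k → IsDistribFamily
      (insert (P1 b * W ^ k)
        {X | ∃ i ≤ k - 1, X = W ^ i * R * W ^ (k - 1 - i)})) :
    ∀ k, 1 ≤ k → IsDistribFamily {X | ∃ i ≤ k, X = W ^ i * R * W ^ (k - i)} := by
  
  intro k hk
  have hWs : W = ⨆ b, Submodule.span F {FreeAlgebra.ι F b} := by
    rw [hW, Submodule.span_range_eq_iSup]
  have hgen : ∀ i ≤ k, ∃ Y : B → Submodule F (FreeAlgebra F B),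
      (∀ b, Y b ∈ insert (P1 b * W ^ k)
          {X | ∃ i ≤ k - 1, X = W ^ i * R * W ^ (k - 1 - i)}) ∧
      W ^ i * R * W ^ (k - i) =
        ⨆ b, (Y b).map (LinearMap.mulLeft F (FreeAlgebra.ι F b)) := by
    intro i hik
    cases i with
    | zero =>
      refine ⟨fun b => P1 b * W ^ k, fun b => Set.mem_insert _ _, ?_⟩
      rw [pow_zero, one_mul, Nat.sub_zero, hR, Submodule.iSup_mul]
      refine iSup_congr fun b => ?_
      rw [mul_assoc]
      exact Lemma45Aux.span_mul_eq_map F _ _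
    | succ j =>
      refine ⟨fun _ => W ^ j * R * W ^ (k - (j + 1)), fun b => ?_, ?_⟩
      · refine Set.mem_insert_of_mem _ ⟨j, by omega, ?_⟩
        rw [show k - 1 - j = k - (j + 1) by omega]
      · rw [pow_succ', mul_assoc, mul_assoc, ← mul_assoc (W ^ j), hWs,
          Submodule.iSup_mul]
        refine iSup_congr fun b => ?_
        exact Lemma45Aux.span_mul_eq_map F _ _
  have key : ∀ X, latGen {X | ∃ i ≤ k, X = W ^ i * R * W ^ (k - i)} X →
      ∃ Y : B → Submodule F (FreeAlgebra F B),
        (∀ b, latGen (insert (P1 b * W ^ k)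
          {X | ∃ i ≤ k - 1, X = W ^ i * R * W ^ (k - 1 - i)}) (Y b)) ∧
        X = ⨆ b, (Y b).map (LinearMap.mulLeft F (FreeAlgebra.ι F b)) := by
    intro X hX
    induction hX with
    | base h =>
      obtain ⟨i, hik, rfl⟩ := h
      obtain ⟨Y, hY, heq⟩ := hgen i hik
      exact ⟨Y, fun b => latGen.base (hY b), heq⟩
    | inf hx hy ihx ihy =>
      obtain ⟨Y, hY, rfl⟩ := ihx
      obtain ⟨Z, hZ, rfl⟩ := ihy
      exact ⟨fun b => Y b ⊓ Z b, fun b => latGen.inf (hY b) (hZ b),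
        Lemma45Aux.inf_iSup_map Y Z⟩
    | sup hx hy ihx ihy =>
      obtain ⟨Y, hY, rfl⟩ := ihx
      obtain ⟨Z, hZ, rfl⟩ := ihy
      exact ⟨fun b => Y b ⊔ Z b, fun b => latGen.sup (hY b) (hZ b),
        Lemma45Aux.sup_iSup_map Y Z⟩
  intro x y z hx hy hz
  obtain ⟨X, hX, rfl⟩ := key x hx
  obtain ⟨Y, hY, rfl⟩ := key y hy
  obtain ⟨Z, hZ, rfl⟩ := key z hz
  rw [Lemma45Aux.sup_iSup_map, Lemma45Aux.inf_iSup_map, Lemma45Aux.inf_iSup_map,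
    Lemma45Aux.inf_iSup_map, Lemma45Aux.sup_iSup_map]
  exact iSup_congr fun b => congrArg (Submodule.map (LinearMap.mulLeft F (FreeAlgebra.ι F b)))
    (hdist b k hk _ _ _ (hX b) (hY b) (hZ b))
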